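/- Let F : ℝ² × ℝ → ℝ be C¹ and θ : ℝ² → ℝ² be C¹ with compact support, Ω ⊂ ℝ² bounded open. Define I(η) = ∫_{(id+ηθ)(Ω)} F(x,η) dx. Then I'(0) = ∫_Ω (F⋆(x) + F(x,0) div θ(x)) dx, where F⋆(x) = ∂_η F(x,0) + ∇F(x,0)·θ(x) is the material derivative. -/

import Mathlib

/-!
Pull the integral back to `Ω` along `Φₜ = id + t • θ`. For small `t`, `Φₜ` is injective (`θ` is
Lipschitz) and `det DΦₜ = det (1 + t • Dθ)` is positive, so the change of variables formula gives
`I t = ∫_Ω det (1 + t • Dθ x) • F (Φₜ x) t dx`. The integrand is `C¹` in `t` with a `t`-derivative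
that is jointly continuous, hence bounded on the compact `[-1, 1] × closure Ω`, and we may
differentiate under the integral sign. At `t = 0` the derivative of the determinant is the trace,
i.e. the divergence, and the derivative of `F (Φₜ x) t` is the material derivative.
-/

open MeasureTheory Filter Topology Function
open scoped NNReal RealInnerProductSpace

noncomputable def vdiv (θ : EuclideanSpace ℝ (Fin 2) → EuclideanSpace ℝ (Fin 2))
    (x : EuclideanSpace ℝ (Fin 2)) : ℝ :=
  ∑ i, fderiv ℝ θ x (EuclideanSpace.single i 1) i

namespace ContinuousLinearMap

variable {E : Type*} [NormedAddCommGroup E] [NormedSpace ℝ E] [FiniteDimensional ℝ E]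

theorem contDiff_det {n : WithTop ℕ∞} : ContDiff ℝ n (fun f : E →L[ℝ] E => f.det) := by
  classical
  let b := Module.finBasis ℝ E
  have hentry : ∀ i j, ContDiff ℝ n fun f : E →L[ℝ] E => b.repr (f (b j)) i := fun i j =>
    ((b.coord i).toContinuousLinearMap.comp (apply ℝ E (b j))).contDiff
  have hdet : (fun f : E →L[ℝ] E => f.det) = fun f =>
      ∑ σ : Equiv.Perm (Fin _), (Equiv.Perm.sign σ : ℝ) * ∏ i, b.repr (f (b i)) (σ i) := by
    ext f
    rw [det, ← LinearMap.det_toMatrix b, Matrix.det_apply']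
    simp [LinearMap.toMatrix_apply]
  rw [hdet]
  exact ContDiff.sum fun σ _ => contDiff_const.mul (contDiff_prod fun i _ => hentry _ _)

theorem hasDerivAt_det_one_add_smul (L : E →L[ℝ] E) :
    HasDerivAt (fun t : ℝ => (1 + t • L).det) (LinearMap.trace ℝ E L) 0 := by
  classical
  let b := Module.finBasis ℝ E
  set M := LinearMap.toMatrix b b L
  set p := (Matrix.det (1 + (Polynomial.X : Polynomial ℝ) • M.map Polynomial.C)).divX.divX
  have hexp : (fun t : ℝ => (1 + t • L).det) = fun t => 1 + M.trace * t + p.eval t * t ^ 2 := by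
    ext t
    rw [← Matrix.det_one_add_smul, det, ← LinearMap.det_toMatrix b]
    simp [M, map_add, LinearMap.toMatrix_one]
  rw [hexp, LinearMap.trace_eq_matrix_trace ℝ b]
  have hquad : HasDerivAt (fun t : ℝ => p.eval t * t ^ 2) 0 0 :=
    ((p.hasDerivAt 0).mul (hasDerivAt_pow 2 (0 : ℝ))).congr_deriv (by simp)
  exact ((((hasDerivAt_id (0 : ℝ)).const_mul M.trace).const_add 1).add hquad).congr_deriv
    (by simp [M])

theorem fderiv_det_one_apply (L : E →L[ℝ] E) :
    fderiv ℝ (fun f : E →L[ℝ] E => f.det) 1 L = LinearMap.trace ℝ E L := by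
  have hcurve : HasDerivAt (fun t : ℝ => 1 + t • L) L 0 := by
    simpa using ((hasDerivAt_id (0 : ℝ)).smul_const L).const_add 1
  have h := ((contDiff_det (n := 1)).differentiable one_ne_zero 1).hasFDerivAt
    |>.comp_hasDerivAt_of_eq 0 hcurve (by simp)
  exact h.unique (hasDerivAt_det_one_add_smul L)

end ContinuousLinearMap

section PerturbationOfIdentity

variable {E : Type*} [NormedAddCommGroup E] [NormedSpace ℝ E]

theorem injective_add_smul_of_lipschitzWith {θ : E → E} {K : ℝ≥0} (hθ : LipschitzWith K θ)
    {t : ℝ} (ht : ‖t‖₊ * K < 1) : Injective fun x => x + t • θ x :=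
  (AntilipschitzWith.id.add_lipschitzWith ((lipschitzWith_smul t).comp hθ)
    (by simpa using ht)).injective

theorem eventually_forall_det_one_add_smul_pos [FiniteDimensional ℝ E] {ι : Type*}
    {L : ι → E →L[ℝ] E} {C : ℝ} (hL : ∀ i, ‖L i‖ ≤ C) :
    ∀ᶠ t in 𝓝 (0 : ℝ), ∀ i, 0 < (1 + t • L i).det := by
  have hdet : ∀ᶠ A in 𝓝 (1 : E →L[ℝ] E), 0 < A.det :=
    continuousAt_const.eventually_lt ContinuousLinearMap.continuous_det.continuousAt
      (by simp [ContinuousLinearMap.det])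
  obtain ⟨δ, hδ, hball⟩ := Metric.eventually_nhds_iff.1 hdet
  have hsmall : ∀ᶠ t in 𝓝 (0 : ℝ), ‖t‖ * C < δ :=
    (continuous_norm.mul continuous_const).continuousAt.eventually_lt continuousAt_const
      (by simpa using hδ)
  filter_upwards [hsmall] with t ht i
  refine hball ?_
  calc dist (1 + t • L i) 1 = ‖t‖ * ‖L i‖ := by simp [dist_eq_norm, norm_smul]
    _ ≤ ‖t‖ * C := by gcongr; exact hL i
    _ < δ := ht

end PerturbationOfIdentity

section ChangeOfVariables

variable {E G : Type*} [NormedAddCommGroup E] [NormedSpace ℝ E] [FiniteDimensional ℝ E]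
  [MeasurableSpace E] [BorelSpace E] [NormedAddCommGroup G] [NormedSpace ℝ G]

theorem eventually_setIntegral_image_add_smul (μ : Measure E) [μ.IsAddHaarMeasure] {θ : E → E}
    (hθ : ContDiff ℝ 1 θ) (hθc : HasCompactSupport θ) {s : Set E} (hs : MeasurableSet s) :
    ∀ᶠ t in 𝓝 (0 : ℝ), ∀ f : E → G, ∫ x in (fun x => x + t • θ x) '' s, f x ∂μ =
      ∫ x in s, (1 + t • fderiv ℝ θ x).det • f (x + t • θ x) ∂μ := by
  obtain ⟨K, hK⟩ := hθ.lipschitzWith_of_hasCompactSupport hθc one_ne_zero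
  obtain ⟨C, hC⟩ := (hθc.fderiv ℝ).exists_bound_of_continuous (hθ.continuous_fderiv one_ne_zero)
  have hsmall : ∀ᶠ t in 𝓝 (0 : ℝ), ‖t‖₊ * K < 1 :=
    (continuous_nnnorm.mul continuous_const).continuousAt.eventually_lt continuousAt_const
      (by simp)
  filter_upwards [hsmall, eventually_forall_det_one_add_smul_pos hC] with t hinj hpos f
  have hderiv : ∀ x, HasFDerivAt (fun x => x + t • θ x) (1 + t • fderiv ℝ θ x) x := fun x =>
    (hasFDerivAt_id x).add (((hθ.differentiable one_ne_zero) x).hasFDerivAt.const_smul t)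
  rw [integral_image_eq_integral_abs_det_fderiv_smul μ hs
    (fun x _ => (hderiv x).hasFDerivWithinAt) (injective_add_smul_of_lipschitzWith hK hinj).injOn]
  simp_rw [abs_of_pos (hpos _)]

end ChangeOfVariables

section Leibniz

variable {X G : Type*} [TopologicalSpace X] [T2Space X] [MeasurableSpace X]
  [OpensMeasurableSpace X] [NormedAddCommGroup G] [NormedSpace ℝ G]
  [SecondCountableTopologyEither X G]

theorem hasDerivAt_setIntegral_of_continuous_deriv (μ : Measure X) [IsFiniteMeasureOnCompacts μ]
    {K s : Set X} (hK : IsCompact K) (hsK : s ⊆ K) (hs : MeasurableSet s) {g g' : ℝ → X → G}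
    (hg : ∀ t, Continuous (g t)) (hg' : Continuous (uncurry g'))
    (hderiv : ∀ t x, HasDerivAt (g · x) (g' t x) t) (t₀ : ℝ) :
    HasDerivAt (fun t => ∫ x in s, g t x ∂μ) (∫ x in s, g' t₀ x ∂μ) t₀ := by
  obtain ⟨C, hC⟩ := ((isCompact_closedBall t₀ 1).prod hK).exists_bound_of_continuousOn
    hg'.continuousOn
  have hμs : μ s < ⊤ := (measure_mono hsK).trans_lt hK.measure_lt_top
  refine (hasDerivAt_integral_of_dominated_loc_of_deriv_le (bound := fun _ => C)
    (Metric.ball_mem_nhds t₀ one_pos) (.of_forall fun t => (hg t).aestronglyMeasurable)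
    (((hg t₀).continuousOn.integrableOn_compact hK).mono_set hsK)
    (hg'.comp (Continuous.prodMk_right t₀)).aestronglyMeasurable ?_ (integrableOn_const hμs.ne)
    (.of_forall fun x t _ => hderiv t x)).2
  filter_upwards [ae_restrict_mem hs] with x hx t ht
  exact hC (t, x) ⟨Metric.ball_subset_closedBall ht, hsK hx⟩

end Leibniz

section MaterialDerivative

variable {E G : Type*} [NormedAddCommGroup E] [NormedSpace ℝ E] [FiniteDimensional ℝ E]
  [MeasurableSpace E] [BorelSpace E] [NormedAddCommGroup G] [NormedSpace ℝ G]

theorem hasDerivAt_setIntegral_image_add_smul (μ : Measure E) [μ.IsAddHaarMeasure] {Ω : Set E}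
    (hΩ : MeasurableSet Ω) (hΩb : Bornology.IsBounded Ω) {F : E → ℝ → G}
    (hF : ContDiff ℝ 1 (uncurry F)) {θ : E → E} (hθ : ContDiff ℝ 1 θ)
    (hθc : HasCompactSupport θ) :
    HasDerivAt (fun t => ∫ x in (fun x => x + t • θ x) '' Ω, F x t ∂μ)
      (∫ x in Ω, fderiv ℝ (uncurry F) (x, 0) (θ x, 1)
        + LinearMap.trace ℝ E (fderiv ℝ θ x) • F x 0 ∂μ) 0 := by
  set L := fderiv ℝ θ
  let det := fun A : E →L[ℝ] E => A.det
  let J t x := det (1 + t • L x) • F (x + t • θ x) t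
  let J' t x := det (1 + t • L x) • fderiv ℝ (uncurry F) (x + t • θ x, t) (θ x, 1)
    + fderiv ℝ det (1 + t • L x) (L x) • F (x + t • θ x) t
  have hdet : ContDiff ℝ 1 det := ContinuousLinearMap.contDiff_det
  have hderiv : ∀ t x, HasDerivAt (J · x) (J' t x) t := by
    intro t x
    have hΦ : HasDerivAt (fun s : ℝ => (x + s • θ x, s)) (θ x, 1) t := by
      simpa using (((hasDerivAt_id t).smul_const (θ x)).const_add x).prodMk (hasDerivAt_id t)
    have hA : HasDerivAt (fun s : ℝ => 1 + s • L x) (L x) t := by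
      simpa using ((hasDerivAt_id t).smul_const (L x)).const_add 1
    exact ((hdet.differentiable one_ne_zero _).hasFDerivAt.comp_hasDerivAt t hA).smul
      ((hF.differentiable one_ne_zero _).hasFDerivAt.comp_hasDerivAt t hΦ)
  have hLc : Continuous L := hθ.continuous_fderiv one_ne_zero
  have hAc : Continuous fun p : ℝ × E => 1 + p.1 • L p.2 :=
    continuous_const.add (continuous_fst.smul (hLc.comp continuous_snd))
  have hΦc : Continuous fun p : ℝ × E => (p.2 + p.1 • θ p.2, p.1) :=
    (continuous_snd.add (continuous_fst.smul (hθ.continuous.comp continuous_snd))).prodMk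
      continuous_fst
  have hJ : ∀ t, Continuous (J t) := fun t =>
    (hdet.continuous.comp (hAc.comp (Continuous.prodMk_right t))).smul
      (hF.continuous.comp (hΦc.comp (Continuous.prodMk_right t)))
  have hJ' : Continuous (uncurry J') :=
    ((hdet.continuous.comp hAc).smul (((hF.continuous_fderiv one_ne_zero).comp hΦc).clm_apply
      ((hθ.continuous.comp continuous_snd).prodMk continuous_const))).add
    ((((hdet.continuous_fderiv one_ne_zero).comp hAc).clm_apply (hLc.comp continuous_snd)).smul
      (hF.continuous.comp hΦc))
  refine ((hasDerivAt_setIntegral_of_continuous_deriv μ hΩb.isCompact_closure subset_closure hΩ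
    hJ hJ' hderiv 0).congr_of_eventuallyEq ?_).congr_deriv ?_
  · filter_upwards [eventually_setIntegral_image_add_smul (G := G) μ hθ hθc hΩ] with t ht
    exact ht _
  · simp [J', det, ContinuousLinearMap.fderiv_det_one_apply, ContinuousLinearMap.det]

end MaterialDerivative

theorem EuclideanSpace.trace_eq_sum_single_apply {ι : Type*} [Fintype ι] [DecidableEq ι]
    (A : EuclideanSpace ℝ ι →L[ℝ] EuclideanSpace ℝ ι) :
    LinearMap.trace ℝ (EuclideanSpace ℝ ι) A = ∑ i, A (EuclideanSpace.single i 1) i := by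
  rw [LinearMap.trace_eq_matrix_trace ℝ (EuclideanSpace.basisFun ι ℝ).toBasis, Matrix.trace]
  simp [LinearMap.toMatrix_apply]

theorem fderiv_uncurry_apply_eq_inner_gradient_add_deriv {E : Type*} [NormedAddCommGroup E]
    [InnerProductSpace ℝ E] [CompleteSpace E] {F : E → ℝ → ℝ} {x : E} {t : ℝ}
    (hF : DifferentiableAt ℝ (uncurry F) (x, t)) (v : E) (s : ℝ) :
    fderiv ℝ (uncurry F) (x, t) (v, s) = ⟪gradient (F · t) x, v⟫ + s * deriv (F x) t := by
  have hx : HasFDerivAt (F · t) (fderiv ℝ (uncurry F) (x, t) ∘L .inl ℝ E ℝ) x :=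
    (hF.hasFDerivAt.comp x (hasFDerivAt_prodMk_left (𝕜 := ℝ) x t) :)
  have ht : HasDerivAt (F x) (fderiv ℝ (uncurry F) (x, t) (0, 1)) t :=
    hF.hasFDerivAt.comp_hasDerivAt t ((hasDerivAt_const t x).prodMk (hasDerivAt_id t))
  rw [inner_gradient_left, hx.fderiv, ht.deriv, ← smul_eq_mul, ← map_smul,
    ContinuousLinearMap.comp_apply, ContinuousLinearMap.inl_apply, ← map_add]
  simp

/-- material differentiation of a domain integral.
`I(η) = ∫_{(id+ηθ)(Ω)} F(x,η) dx` satisfies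
`I'(0) = ∫_Ω (F⋆ + F(·,0) div θ)`, with `F⋆(x) = ∂_η F(x,0) + ∇F(x,0)·θ(x)`. -/
theorem material_differentiation_of_volume_integral
    (Ω : Set (EuclideanSpace ℝ (Fin 2)))
    (hΩo : IsOpen Ω) (hΩb : Bornology.IsBounded Ω)
    (F : EuclideanSpace ℝ (Fin 2) → ℝ → ℝ)
    (hF : ContDiff ℝ 1 (fun p : EuclideanSpace ℝ (Fin 2) × ℝ => F p.1 p.2))
    (θ : EuclideanSpace ℝ (Fin 2) → EuclideanSpace ℝ (Fin 2))
    (hθ : ContDiff ℝ 1 θ) (hθc : HasCompactSupport θ)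
    (I : ℝ → ℝ)
    (hI : ∀ η, I η = ∫ x in (fun x => x + η • θ x) '' Ω, F x η) :
    HasDerivAt I
      (∫ x in Ω,
        (deriv (fun t => F x t) 0 + ⟪gradient (fun y => F y 0) x, θ x⟫
          + F x 0 * vdiv θ x)) 0 := by
  rw [show I = _ from funext hI]
  refine (hasDerivAt_setIntegral_image_add_smul volume hΩo.measurableSet hΩb hF hθ hθc
    ).congr_deriv (integral_congr_ae (ae_of_all _ fun x => ?_))
  dsimp only
  rw [fderiv_uncurry_apply_eq_inner_gradient_add_deriv (hF.differentiable one_ne_zero _), vdiv,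
    ← EuclideanSpace.trace_eq_sum_single_apply, smul_eq_mul]
  ring
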